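/- Let n ≥ 2 and let f ∈ S_n be a Laurent polynomial with vanishing logarithmic Hessian whose logarithmic polar map L_f has generic rank n−k, where 1 ≤ k ≤ n−1. Then there exist k linearly independent vectors λ^{(1)}, …, λ^{(k)} ∈ ℤⁿ such that for every i ∈ {1,…,k} and every m ∈ {1,…,n} the Laurent polynomial identity Σ_{j=1}^{n} λ^{(i)}_j · θ_j(θ_m f) = 0 holds; equivalently, the diagonal vector fields X_i = Σ_j λ^{(i)}_j x_j ∂/∂x_j annihilate each component x_m f_{x_m} of L_f, so they are tangent to the fibers of L_f. -/

import Mathlib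

noncomputable section

/-- The ring of Laurent polynomials in `n` variables over `ℂ`:
`S_n = ℂ[x_1^{±1},…,x_n^{±1}]`, realized as the group algebra of `ℤⁿ`. -/
abbrev LaurentPoly (n : ℕ) := AddMonoidAlgebra ℂ (Fin n → ℤ)

/-- The `j`-th logarithmic derivative `θ_j f = x_j ∂f/∂x_j = Σ_I a_I I_j x^I`. -/
noncomputable def thetaDeriv {n : ℕ} (j : Fin n) (f : LaurentPoly n) : LaurentPoly n :=
  AddMonoidAlgebra.ofCoeff (Finsupp.sum (AddMonoidAlgebra.coeff f) fun I a => Finsupp.single I (a * (I j : ℂ)))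

/-- Evaluation of a Laurent polynomial at a point of the torus `(ℂ*)ⁿ`. -/
noncomputable def tEval {n : ℕ} (x : Fin n → ℂˣ) (f : LaurentPoly n) : ℂ :=
  Finsupp.sum (AddMonoidAlgebra.coeff f) fun I a => a * ∏ i, ((x i ^ I i : ℂˣ) : ℂ)

/-- The logarithmic Hessian matrix `Θf = ((θ_j θ_i f))_{i,j}` of `f`,
as a matrix of Laurent polynomials. -/
noncomputable def logHessian {n : ℕ} (f : LaurentPoly n) :
    Matrix (Fin n) (Fin n) (LaurentPoly n) :=
  Matrix.of fun i j => thetaDeriv j (thetaDeriv i f)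

/-- The logarithmic Hessian matrix of `f` evaluated at a point `x` of the torus. -/
noncomputable def logHessianAt {n : ℕ} (f : LaurentPoly n) (x : Fin n → ℂˣ) :
    Matrix (Fin n) (Fin n) ℂ :=
  Matrix.of fun i j => tEval x (thetaDeriv j (thetaDeriv i f))

/-- The pullback `ξ_A^* f` of a Laurent polynomial `f` by the monoidal map
`ξ_A(x) = (∏_j x_j^{a_{1j}}, …, ∏_j x_j^{a_{nj}})`; on exponents this is `I ↦ Aᵀ I`,
since `f(ξ_A x) = Σ_I a_I x^{Aᵀ I}`. -/
noncomputable def monoidalPullback {n : ℕ} (A : Matrix (Fin n) (Fin n) ℤ)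
    (f : LaurentPoly n) : LaurentPoly n :=
  AddMonoidAlgebra.ofCoeff (Finsupp.mapDomain (fun I => A.transpose.mulVec I) (AddMonoidAlgebra.coeff f))

/-!
Write `f = ∑_{I ∈ P} a_I x^I`. Then `Θf(x) = ∑_I a_I x^I I Iᵀ`, and
`∑_j λ_j θ_j θ_m f = ∑_I a_I I_m ⟨λ, I⟩ x^I` vanishes as soon as `λ ⊥ P`. So it suffices to show
that the generic rank of `Θf` is at least `dim span P`: then `P^⊥ ⊆ ℚⁿ` has dimension at least `k`,
and clearing denominators in a basis of it gives the `λ^{(i)}`.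

For the rank bound, restrict to a curve `x = t^w` on which the exponents `⟨w, I⟩` are pairwise
distinct. In the greedy basis of `span P` for the order by `⟨w, I⟩`, each `I` has coordinates only
on basis vectors of weight `≥ ⟨w, I⟩`. Hence the Gram-type matrix `∑_I a_I t^{⟨w, I⟩} c_I c_Iᵀ` of
these coordinates has a determinant whose top coefficient in `t` comes from the diagonal alone and
is a nonzero product.
-/

open Polynomial Matrix Submodule Set Module

namespace Polynomial

theorem coeff_prod_sum_of_natDegree_le {R ι : Type*} [CommSemiring R] (s : Finset ι)
    (f : ι → R[X]) (d : ι → ℕ) (h : ∀ i ∈ s, (f i).natDegree ≤ d i) :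
    (∏ i ∈ s, f i).coeff (∑ i ∈ s, d i) = ∏ i ∈ s, (f i).coeff (d i) := by
  classical
  induction s using Finset.induction_on with
  | empty => simp
  | insert a s ha ih =>
    simp only [Finset.forall_mem_insert] at h
    rw [Finset.prod_insert ha, Finset.sum_insert ha, Finset.prod_insert ha,
      coeff_mul_add_eq_of_natDegree_le h.1
        ((natDegree_prod_le _ _).trans (Finset.sum_le_sum h.2)), ih h.2]

theorem exists_ne_zero_eval_ne_zero {K : Type*} [Field K] [Infinite K] {p : K[X]} (hp : p ≠ 0) :
    ∃ z, z ≠ 0 ∧ p.eval z ≠ 0 := by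
  classical
  obtain ⟨z, hz⟩ := Infinite.exists_notMem_finset (X * p).roots.toFinset
  rw [Multiset.mem_toFinset, mem_roots (mul_ne_zero X_ne_zero hp), IsRoot, eval_mul, eval_X,
    mul_eq_zero, not_or] at hz
  exact ⟨z, hz⟩

end Polynomial

namespace Matrix

/-- Only the identity permutation reaches degree `∑ i, d i` in the Leibniz expansion. -/
theorem coeff_det_eq_prod_coeff_diag {ι R : Type*} [Fintype ι] [DecidableEq ι] [CommRing R]
    (N : Matrix ι ι R[X]) (d : ι → ℕ) (hdiag : ∀ i, (N i i).natDegree ≤ d i)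
    (hoff : ∀ i j, i ≠ j → 2 * (N i j).natDegree < d i + d j) :
    N.det.coeff (∑ i, d i) = ∏ i, (N i i).coeff (d i) := by
  rw [det_apply, finsetSum_coeff, Finset.sum_eq_single 1]
  · simp [coeff_prod_sum_of_natDegree_le _ _ _ fun i _ => hdiag i]
  · intro σ _ hσ
    obtain ⟨i₀, hi₀⟩ : ∃ i, σ i ≠ i := by
      by_contra! h
      exact hσ (Equiv.ext h)
    have hlt : 2 * ∑ i, (N (σ i) i).natDegree < 2 * ∑ i, d i := by
      calc 2 * ∑ i, (N (σ i) i).natDegree = ∑ i, 2 * (N (σ i) i).natDegree := Finset.mul_sum ..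
        _ < ∑ i, (d (σ i) + d i) := by
          refine Finset.sum_lt_sum (fun i _ => ?_) ⟨i₀, Finset.mem_univ _, hoff _ _ hi₀⟩
          by_cases h : σ i = i
          · rw [h]
            linarith [hdiag i]
          · exact (hoff _ _ h).le
        _ = 2 * ∑ i, d i := by rw [Finset.sum_add_distrib, Equiv.sum_comp σ d, two_mul]
    rw [Units.smul_def, coeff_smul, coeff_eq_zero_of_natDegree_lt
      ((natDegree_prod_le _ _).trans_lt (by omega)), smul_zero]
  · simp

theorem exists_linearIndependent_int_mulVec_eq_zero {m n : Type*} [Fintype n] (A : Matrix m n ℚ)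
    {k : ℕ} (hk : A.rank + k ≤ Fintype.card n) :
    ∃ lam : Fin k → n → ℤ, LinearIndependent ℤ lam ∧ ∀ i, A *ᵥ (fun j => (lam i j : ℚ)) = 0 := by
  have hker : k ≤ finrank ℚ (LinearMap.ker A.mulVecLin) := by
    have := LinearMap.finrank_range_add_finrank_ker A.mulVecLin
    rw [Module.finrank_fintype_fun_eq_card] at this
    rw [rank] at hk
    omega
  obtain ⟨μ, hμ⟩ := exists_linearIndependent_of_le_finrank hker
  obtain ⟨b, hb⟩ := IsLocalization.exist_integer_multiples_of_finite (nonZeroDivisors ℤ)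
    fun p : Fin k × n => (μ p.1 : n → ℚ) p.2
  choose lam hlam using hb
  have hcast : ∀ i, (fun j => (lam (i, j) : ℚ)) = ((b : ℤ) : ℚ) • (μ i : n → ℚ) := fun i => by
    ext j
    simpa using hlam (i, j)
  have hb0 : ((b : ℤ) : ℚ) ≠ 0 := by exact_mod_cast nonZeroDivisors.coe_ne_zero b
  refine ⟨fun i j => lam (i, j), ?_, fun i => ?_⟩
  · rw [← linearIndependent_algebraMap_comp_iff (S := ℚ)]
    have : (fun i => algebraMap ℤ ℚ ∘ fun j => lam (i, j)) =
        (fun _ : Fin k => Units.mk0 _ hb0) • fun i => (μ i : n → ℚ) := by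
      ext i j
      simpa using congrFun (hcast i) j
    rw [this]
    exact (hμ.map' _ (LinearMap.ker A.mulVecLin).ker_subtype).units_smul _
  · rw [hcast, mulVec_smul, show A *ᵥ (μ i : n → ℚ) = 0 from (μ i).2, smul_zero]

variable {K m n l : Type*} [Field K] [Fintype m] [Fintype n]

theorem rank_mul_eq_right_of_mulVec_injective {A : Matrix l m K}
    (hA : Function.Injective A.mulVec) (B : Matrix m n K) : (A * B).rank = B.rank := by
  rw [rank, rank, mulVecLin_mul, LinearMap.range_comp]
  exact (LinearEquiv.finrank_eq (Submodule.equivMapOfInjective A.mulVecLin hA _)).symm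

theorem rank_transpose_mul_mul_of_linearIndependent_row {B : Matrix m n K}
    (hB : LinearIndependent K B.row) (M : Matrix m m K) : (Bᵀ * M * B).rank = M.rank := by
  have hBt : Function.Injective Bᵀ.mulVec := mulVec_injective_iff.2 (by rwa [col_transpose])
  rw [Matrix.mul_assoc, rank_mul_eq_right_of_mulVec_injective hBt, ← rank_transpose,
    transpose_mul, rank_mul_eq_right_of_mulVec_injective hBt, rank_transpose]

theorem rank_le_rank_map_algebraMap {L : Type*} [Field L] [Algebra K L] (A : Matrix m n K) :
    A.rank ≤ (A.map (algebraMap K L)).rank := by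
  obtain ⟨κ, a, -, hspan, hind⟩ := exists_linearIndependent' K A.row
  have : Fintype κ := @Fintype.ofFinite κ hind.finite
  have hind' : LinearIndependent L ((A.map (algebraMap K L)).row ∘ a) :=
    linearIndependent_algebraMap_comp_iff.2 hind
  rw [rank_eq_finrank_span_row, ← hspan, finrank_span_eq_card hind,
    ← finrank_span_eq_card hind', rank_eq_finrank_span_row]
  exact Submodule.finrank_mono (span_mono (range_comp_subset_range _ _))

end Matrix

section GreedyBasis

variable {K V ι : Type*} [DivisionRing K] [AddCommGroup V] [Module K V] [LinearOrder ι]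
  [Fintype ι]

/-- `G` is the greedy basis: keep `u i` unless it lies in the span of the `u j` with `j > i`. -/
theorem exists_linearIndepOn_forall_mem_span_Ici (u : ι → V) :
    ∃ G : Finset ι, LinearIndepOn K u G ∧ (∀ g ∈ G, u g ∉ span K (u '' Ioi g)) ∧
      ∀ i, u i ∈ span K (u '' (G ∩ Ici i)) := by
  classical
  set G := Finset.univ.filter fun i => u i ∉ span K (u '' Ioi i)
  have hG : ∀ g ∈ G, u g ∉ span K (u '' Ioi g) := fun g hg => (Finset.mem_filter.1 hg).2
  refine ⟨G, ?_, hG, fun i => ?_⟩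
  · suffices ∀ s ⊆ G, LinearIndepOn K u s from this G subset_rfl
    intro s
    induction s using Finset.induction_on_min with
    | empty => simp
    | insert a s has ih =>
      intro hs
      rw [Finset.coe_insert]
      refine (ih ((Finset.subset_insert _ _).trans hs)).insert fun h => ?_
      exact hG a (hs (Finset.mem_insert_self a s)) (span_mono (image_mono has) h)
  · induction i using WellFoundedGT.induction with
    | _ i ih =>
      by_cases hi : u i ∈ span K (u '' Ioi i)
      · refine span_le.2 ?_ hi
        rintro _ ⟨j, hj, rfl⟩
        exact span_mono (image_mono (inter_subset_inter_right _ (Ici_subset_Ici.2 hj.le)))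
          (ih j hj)
      · exact subset_span ⟨i, ⟨Finset.mem_filter.2 ⟨Finset.mem_univ _, hi⟩, self_mem_Ici⟩, rfl⟩

theorem exists_linearIndepOn_linearCombination_supported_Ici (u : ι → V) :
    ∃ (G : Finset ι) (l : ι → ι →₀ K), LinearIndepOn K u G ∧
      (∀ i, Finsupp.linearCombination K u (l i) = u i) ∧
      (∀ i, l i ∈ Finsupp.supported K K (G ∩ Ici i)) ∧ ∀ g ∈ G, l g g ≠ 0 := by
  obtain ⟨G, hGind, hGnot, hGspan⟩ := exists_linearIndepOn_forall_mem_span_Ici (K := K) u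
  choose l hl hlu using fun i => (Finsupp.mem_span_image_iff_linearCombination K).1 (hGspan i)
  refine ⟨G, l, hGind, hlu, hl, fun g hg hgg => hGnot g hg ?_⟩
  refine (Finsupp.mem_span_image_iff_linearCombination K).2 ⟨l g, fun j hj => ?_, hlu g⟩
  exact (Set.mem_Ici.1 (hl g hj).2).lt_of_ne fun h => by
    subst h
    exact Finsupp.mem_support_iff.1 hj hgg

end GreedyBasis

section SumOfRankOne

variable {K ι : Type*} [Field K] [Fintype ι]

/-- The coefficient of `X ^ ∑_g e g` in this determinant is `∏_g c g * a g g ^ 2`. -/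
theorem det_sum_C_mul_X_pow_ne_zero_of_triangular [DecidableEq ι] {G : Finset ι}
    (a : ι → G → K) (c : ι → K) (hc : ∀ i, c i ≠ 0) (e : ι → ℕ) (he : Function.Injective e)
    (ha : ∀ i g, a i g ≠ 0 → e i ≤ e g) (ha_diag : ∀ g : G, a g g ≠ 0) :
    (of fun g h : G => ∑ i, C (c i * a i g * a i h) * X ^ e i).det ≠ 0 := by
  set N : Matrix G G K[X] := of fun g h => ∑ i, C (c i * a i g * a i h) * X ^ e i
  have hdeg : ∀ g h, (N g h).natDegree ≤ min (e g) (e h) := by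
    intro g h
    refine natDegree_sum_le_of_forall_le _ _ fun i _ => ?_
    by_cases hgh : a i g ≠ 0 ∧ a i h ≠ 0
    · exact (natDegree_C_mul_X_pow_le _ _).trans (le_min (ha i g hgh.1) (ha i h hgh.2))
    · rcases not_and_or.1 hgh with hg | hg <;> simp [not_not.1 hg]
  have hcoeff : ∀ g, (N g g).coeff (e g) = c g * a g g * a g g := by
    intro g
    simp only [N, of_apply, finsetSum_coeff, coeff_C_mul_X_pow, he.eq_iff, Finset.sum_ite_eq,
      Finset.mem_univ, if_true]
  have htop := coeff_det_eq_prod_coeff_diag N (fun g => e g)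
    (fun g => (hdeg g g).trans (min_le_left _ _)) fun g h hgh => by
      have := hdeg g h
      have : e g ≠ e h := fun h' => hgh (Subtype.ext (he h'))
      omega
  intro hN
  rw [hN, coeff_zero, eq_comm, Finset.prod_eq_zero_iff] at htop
  obtain ⟨g, -, hg⟩ := htop
  rw [hcoeff] at hg
  exact mul_ne_zero (mul_ne_zero (hc g) (ha_diag g)) (ha_diag g) hg

/-- With `u i = ∑_g l i g • u g` in the greedy basis for the order by `e`, the matrix is
`Bᵀ N(z) B` for the rows `B` of the basis and the Gram-type matrix `N` of the coordinates. -/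
theorem exists_finrank_span_le_rank_sum_pow_smul_vecMulVec [Infinite K] {m : Type*} [Fintype m]
    (u : ι → m → K) (c : ι → K) (hc : ∀ i, c i ≠ 0) (e : ι → ℕ) (he : Function.Injective e) :
    ∃ z : K, z ≠ 0 ∧ finrank K (span K (range u)) ≤
      (∑ i, (c i * z ^ e i) • vecMulVec (u i) (u i)).rank := by
  classical
  let : LinearOrder ι := LinearOrder.lift' e he
  obtain ⟨G, l, hGind, hlu, hl, hl_diag⟩ :=
    exists_linearIndepOn_linearCombination_supported_Ici (K := K) u
  set B : Matrix G m K := of fun g => u g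
  have hlB : ∀ i, (fun g : G => l i g) ᵥ* B = u i := by
    intro i
    rw [← hlu i, Finsupp.linearCombination_apply, Finsupp.sum_of_support_subset (l i)
      (fun j hj => (hl i hj).1) _ (by simp), ← Finset.sum_coe_sort G]
    ext j
    simp [B, vecMul, dotProduct, Finset.sum_apply, mul_comm]
  set N : Matrix G G K[X] := of fun g h => ∑ i, C (c i * l i g * l i h) * X ^ e i
  have hN : N.det ≠ 0 := det_sum_C_mul_X_pow_ne_zero_of_triangular (fun i g => l i g) c hc e he
    (fun i g hg => (hl i (Finsupp.mem_support_iff.2 hg)).2) fun g => hl_diag g g.2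
  obtain ⟨z, hz, hdet⟩ := exists_ne_zero_eval_ne_zero hN
  have hNz : N.map (eval z) =
      ∑ i, (c i * z ^ e i) • vecMulVec (fun g : G => l i g) (fun g : G => l i g) := by
    ext g h
    simp only [N, map_apply, of_apply, eval_finsetSum, eval_mul, eval_C, eval_pow, eval_X,
      Matrix.sum_apply, Matrix.smul_apply, vecMulVec_apply, smul_eq_mul]
    exact Finset.sum_congr rfl fun i _ => by ring
  have hsum : ∑ i, (c i * z ^ e i) • vecMulVec (u i) (u i) = Bᵀ * N.map (eval z) * B := by
    simp only [hNz, Matrix.mul_sum, Matrix.sum_mul, Matrix.mul_smul, Matrix.smul_mul,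
      mul_vecMulVec, vecMulVec_mul, mulVec_transpose, hlB]
  refine ⟨z, hz, ?_⟩
  rw [hsum, rank_transpose_mul_mul_of_linearIndependent_row (B := B) hGind, rank_of_det_ne_zero
    (by rwa [show N.map (eval z) = (evalRingHom z).mapMatrix N from rfl, ← RingHom.map_det]),
    Fintype.card_coe]
  calc finrank K (span K (range u)) ≤ finrank K (span K (range B.row)) := by
        refine Submodule.finrank_mono (span_le.2 ?_)
        rintro _ ⟨i, rfl⟩
        rw [← hlB i, ← range_vecMulLinear]
        exact LinearMap.mem_range_self _ _
    _ ≤ G.card := (finrank_range_le_card B.row).trans_eq (Fintype.card_coe G)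

theorem exists_finrank_span_le_rank_sum_zpow_smul_vecMulVec [Infinite K] {m : Type*}
    [Fintype m] (u : ι → m → K) (c : ι → K) (hc : ∀ i, c i ≠ 0) (e : ι → ℤ)
    (he : Function.Injective e) :
    ∃ z : K, z ≠ 0 ∧ finrank K (span K (range u)) ≤
      (∑ i, (c i * z ^ e i) • vecMulVec (u i) (u i)).rank := by
  set s : ℕ := ∑ i, (e i).natAbs
  have hs : ∀ i, (((e i + s).toNat : ℕ) : ℤ) = e i + s := fun i => Int.toNat_of_nonneg <| by
    have := Finset.single_le_sum (fun j _ => Nat.zero_le (e j).natAbs) (Finset.mem_univ i)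
    omega
  obtain ⟨z, hz, hle⟩ := exists_finrank_span_le_rank_sum_pow_smul_vecMulVec u c hc
    (fun i => (e i + s).toNat) fun i j h => he (by simpa [hs] using congrArg (Nat.cast : ℕ → ℤ) h)
  refine ⟨z, hz, hle.trans_eq ?_⟩
  have hshift : ∑ i, (c i * z ^ (e i + s).toNat) • vecMulVec (u i) (u i) =
      z ^ s • ∑ i, (c i * z ^ e i) • vecMulVec (u i) (u i) := by
    rw [Finset.smul_sum]
    refine Finset.sum_congr rfl fun i _ => ?_
    rw [smul_smul, ← zpow_natCast, hs, zpow_add₀ hz, zpow_natCast]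
    ring_nf
  rw [hshift,
    rank_smul_of_mem_nonZeroDivisors _ (mem_nonZeroDivisors_of_ne_zero (pow_ne_zero _ hz))]

end SumOfRankOne

theorem Finset.prod_zpow_eq_zpow_sum {G ι : Type*} [CommGroup G] (s : Finset ι) (f : ι → ℤ)
    (a : G) : ∏ i ∈ s, a ^ f i = a ^ ∑ i ∈ s, f i := by
  classical
  induction s using Finset.induction_on with
  | empty => simp
  | insert i s hi ih => rw [Finset.prod_insert hi, Finset.sum_insert hi, ih, _root_.zpow_add]

/-- `w = (1, q, q², …)` separates `P` as soon as `q` avoids the roots of the polynomials with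
coefficient vectors `I - I'`. -/
theorem exists_injOn_dotProduct {n : ℕ} (P : Finset (Fin n → ℤ)) :
    ∃ w : Fin n → ℤ, Set.InjOn (w ⬝ᵥ ·) P := by
  classical
  have hQ : ∏ p ∈ P.offDiag, ofFn n (p.1 - p.2) ≠ 0 := Finset.prod_ne_zero_iff.2 fun p hp => by
    rw [Ne, ← map_zero (ofFn n), (injective_ofFn n).eq_iff, sub_eq_zero]
    exact (Finset.mem_offDiag.1 hp).2.2
  obtain ⟨q, hq⟩ : ∃ q, (∏ p ∈ P.offDiag, ofFn n (p.1 - p.2)).eval q ≠ 0 := by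
    by_contra! h
    exact hQ (Polynomial.funext (by simpa using h))
  refine ⟨fun j => q ^ (j : ℕ), fun I hI I' hI' h => by_contra fun hne => hq ?_⟩
  rw [eval_prod]
  refine Finset.prod_eq_zero (i := (I, I')) (Finset.mem_offDiag.2 ⟨hI, hI', hne⟩) ?_
  simp only [ofFn_eq_sum_monomial, eval_finsetSum, eval_monomial, Pi.sub_apply, sub_mul,
    Finset.sum_sub_distrib]
  simpa [dotProduct, mul_comm, sub_eq_zero] using h

section LaurentPoly

variable {n : ℕ}

def exponentMatrix (f : LaurentPoly n) : Matrix f.coeff.support (Fin n) ℚ :=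
  of fun I j => (I.1 j : ℚ)

theorem coeff_thetaDeriv (j : Fin n) (f : LaurentPoly n) (I : Fin n → ℤ) :
    (thetaDeriv j f).coeff I = f.coeff I * I j := by
  rw [thetaDeriv, AddMonoidAlgebra.coeff_ofCoeff, Finsupp.sum_apply, Finsupp.sum,
    Finset.sum_eq_single I]
  · simp
  · intro J _ hJ
    simp [hJ]
  · intro hI
    simp [Finsupp.notMem_support_iff.1 hI]

theorem support_thetaDeriv_subset (j : Fin n) (f : LaurentPoly n) :
    (thetaDeriv j f).coeff.support ⊆ f.coeff.support := fun I hI => by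
  rw [Finsupp.mem_support_iff, coeff_thetaDeriv] at hI
  exact Finsupp.mem_support_iff.2 (left_ne_zero_of_mul hI)

theorem sum_smul_thetaDeriv_eq_zero (g : LaurentPoly n) (lam : Fin n → ℤ)
    (h : ∀ I ∈ g.coeff.support, ∑ j, lam j * I j = 0) :
    ∑ j, (lam j : ℂ) • thetaDeriv j g = 0 := by
  ext I
  simp only [AddMonoidAlgebra.coeff_sum, Finset.sum_apply', AddMonoidAlgebra.coeff_smul_apply,
    coeff_thetaDeriv, smul_eq_mul, AddMonoidAlgebra.coeff_zero, Finsupp.coe_zero, Pi.zero_apply]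
  by_cases hI : I ∈ g.coeff.support
  · calc ∑ j, (lam j : ℂ) * (g.coeff I * I j) = g.coeff I * ((∑ j, lam j * I j : ℤ) : ℂ) := by
          push_cast
          rw [Finset.mul_sum]
          exact Finset.sum_congr rfl fun j _ => by ring
      _ = 0 := by rw [h I hI, Int.cast_zero, mul_zero]
  · simp [Finsupp.notMem_support_iff.1 hI]

theorem tEval_eq_sum_of_support_subset (x : Fin n → ℂˣ) {g : LaurentPoly n}
    {s : Finset (Fin n → ℤ)} (hs : g.coeff.support ⊆ s) :
    tEval x g = ∑ I ∈ s, g.coeff I * ∏ i, ((x i ^ I i : ℂˣ) : ℂ) :=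
  Finset.sum_subset hs fun I _ hI => by simp [Finsupp.notMem_support_iff.1 hI]

theorem logHessianAt_eq_sum (f : LaurentPoly n) (x : Fin n → ℂˣ) :
    logHessianAt f x = ∑ I : f.coeff.support, (f.coeff I * ∏ i, ((x i ^ I.1 i : ℂˣ) : ℂ)) •
      vecMulVec (fun j => (I.1 j : ℂ)) (fun j => (I.1 j : ℂ)) := by
  ext j k
  rw [logHessianAt, of_apply, tEval_eq_sum_of_support_subset x
    ((support_thetaDeriv_subset _ _).trans (support_thetaDeriv_subset _ _)),
    ← Finset.sum_coe_sort]
  simp only [coeff_thetaDeriv, Matrix.sum_apply, Matrix.smul_apply, vecMulVec_apply, smul_eq_mul]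
  exact Finset.sum_congr rfl fun I _ => by ring

theorem logHessianAt_zpow (f : LaurentPoly n) (t : ℂˣ) (w : Fin n → ℤ) :
    logHessianAt f (fun i => t ^ w i) =
      ∑ I : f.coeff.support, (f.coeff I * (t : ℂ) ^ (w ⬝ᵥ I.1)) •
        vecMulVec (fun j => (I.1 j : ℂ)) (fun j => (I.1 j : ℂ)) := by
  have hmon : ∀ I : Fin n → ℤ, ∏ i, (((t ^ w i) ^ I i : ℂˣ) : ℂ) = (t : ℂ) ^ (w ⬝ᵥ I) := by
    intro I
    simp_rw [← Units.coe_prod, ← _root_.zpow_mul]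
    rw [Finset.prod_zpow_eq_zpow_sum, Units.val_zpow_eq_zpow_val]
    rfl
  simp only [logHessianAt_eq_sum, hmon]

theorem exists_rank_exponentMatrix_le_rank_logHessianAt (f : LaurentPoly n) :
    ∃ x : Fin n → ℂˣ, (exponentMatrix f).rank ≤ (logHessianAt f x).rank := by
  obtain ⟨w, hw⟩ := exists_injOn_dotProduct f.coeff.support
  obtain ⟨z, hz, hle⟩ := exists_finrank_span_le_rank_sum_zpow_smul_vecMulVec
    (fun (I : f.coeff.support) j => (I.1 j : ℂ)) (fun I => f.coeff I)
    (fun I => Finsupp.mem_support_iff.1 I.2) (fun I => w ⬝ᵥ I.1)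
    fun I J h => Subtype.ext (hw I.2 J.2 h)
  refine ⟨fun i => Units.mk0 z hz ^ w i, ?_⟩
  rw [logHessianAt_zpow, Units.val_mk0]
  refine le_trans ?_ hle
  calc (exponentMatrix f).rank ≤ ((exponentMatrix f).map (algebraMap ℚ ℂ)).rank :=
        rank_le_rank_map_algebraMap _
    _ = _ := by
        rw [rank_eq_finrank_span_row]
        congr!

end LaurentPoly

theorem diagonal_vector_fields_tangent_to_fibers_general (n k : ℕ) (hkn : k ≤ n - 1) (f : LaurentPoly n)
    (hrank_le : ∀ x : Fin n → ℂˣ, (logHessianAt f x).rank ≤ n - k) :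
    ∃ lam : Fin k → (Fin n → ℤ), LinearIndependent ℤ lam ∧
      ∀ (i : Fin k) (m : Fin n),
        (∑ j : Fin n, (lam i j : ℂ) • thetaDeriv j (thetaDeriv m f)) = 0 := by
  obtain ⟨x, hx⟩ := exists_rank_exponentMatrix_le_rank_logHessianAt f
  obtain ⟨lam, hind, hker⟩ := (exponentMatrix f).exists_linearIndependent_int_mulVec_eq_zero
    (k := k) (by have := hrank_le x; rw [Fintype.card_fin]; omega)
  refine ⟨lam, hind, fun i m => sum_smul_thetaDeriv_eq_zero _ _ fun I hI => ?_⟩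
  have hI := congrFun (hker i) ⟨I, support_thetaDeriv_subset m f hI⟩
  simp only [exponentMatrix, mulVec, dotProduct, of_apply, Pi.zero_apply] at hI
  exact_mod_cast (Finset.sum_congr rfl fun j _ => mul_comm _ _).trans hI

/-- **Remark 3.5 (diagonal vector fields tangent to the fibers of `L_f`).**
If `f ∈ S_n` (`n ≥ 2`) has vanishing logarithmic Hessian and `L_f` has generic rank
`n − k` with `1 ≤ k ≤ n − 1`, then there exist `k` linearly independent integer vectors
`λ^{(1)}, …, λ^{(k)} ∈ ℤⁿ` such that `Σ_j λ^{(i)}_j · θ_j(θ_m f) = 0` in `S_n` for all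
`i`, `m`; i.e. the vector fields `X_i = Σ_j λ^{(i)}_j x_j ∂/∂x_j` annihilate every
component `x_m f_{x_m}` of `L_f` and hence are tangent to its fibers. -/
theorem diagonal_vector_fields_tangent_to_fibers (n k : ℕ) (hn : 2 ≤ n) (hk : 1 ≤ k)
    (hkn : k ≤ n - 1) (f : LaurentPoly n)
    (hvanish : (logHessian f).det = 0)
    (hrank_le : ∀ x : Fin n → ℂˣ, (logHessianAt f x).rank ≤ n - k)
    (hrank_eq : ∃ x : Fin n → ℂˣ, (logHessianAt f x).rank = n - k) :
    ∃ lam : Fin k → (Fin n → ℤ), LinearIndependent ℤ lam ∧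
      ∀ (i : Fin k) (m : Fin n),
        (∑ j : Fin n, (lam i j : ℂ) • thetaDeriv j (thetaDeriv m f)) = 0 :=
  diagonal_vector_fields_tangent_to_fibers_general n k hkn f hrank_le
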